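/- Fix G ∈ ℝ^{m×n} with reduced SVD G = UΣVᵀ, a constant c > 0, and β ∈ (0, 1). Define L_0 = c·I_m, R_0 = c·I_n, and for t ≥ 1 the coupled KL-Shampoo iteration L_t = β L_{t−1} + (1 − β) G R_{t−1}^{−1} Gᵀ and R_t = β R_{t−1} + (1 − β) Gᵀ L_{t−1}^{−1} G. Then L_t and R_t are symmetric positive definite for every t, the limits L_∞ := lim_{t→∞} L_t = (G Gᵀ)^{1/2} and R_∞ := lim_{t→∞} R_t = (Gᵀ G)^{1/2} exist, and (L_∞)^{†/2} · G · (R_∞)^{†/2} = U Vᵀ, the polar factor of G. -/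

import Mathlib

open Matrix Filter

section OldSqrt

open scoped ComplexOrder

/-- The positive semidefinite square root of a positive semidefinite matrix, as defined in
Mathlib (December 2024); removed from current Mathlib. -/
noncomputable def Matrix.PosSemidef.sqrt {n 𝕜 : Type*} [Fintype n] [DecidableEq n] [RCLike 𝕜]
    {A : Matrix n n 𝕜} (hA : A.PosSemidef) : Matrix n n 𝕜 :=
  hA.1.eigenvectorUnitary.1 * diagonal ((↑) ∘ Real.sqrt ∘ hA.1.eigenvalues) *
    (star hA.1.eigenvectorUnitary : Matrix n n 𝕜)

end OldSqrt

/-- The four Penrose conditions characterizing the Moore–Penrose pseudoinverse `X = P^†`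
of a real matrix `P`. -/
def IsMoorePenrose {N : ℕ} (P X : Matrix (Fin N) (Fin N) ℝ) : Prop :=
  P * X * P = P ∧ X * P * X = X ∧ (P * X)ᵀ = P * X ∧ (X * P)ᵀ = X * P

/-- The coupled KL-Shampoo factor-matrix iteration for a fixed gradient `G`:
`L_0 = c I`, `R_0 = c I`,
`L_{t+1} = β L_t + (1 − β) G R_t⁻¹ Gᵀ`, `R_{t+1} = β R_t + (1 − β) Gᵀ L_t⁻¹ G`. -/
noncomputable def klIter {m n : ℕ} (G : Matrix (Fin m) (Fin n) ℝ) (c β : ℝ) :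
    ℕ → Matrix (Fin m) (Fin m) ℝ × Matrix (Fin n) (Fin n) ℝ
  | 0 => (c • (1 : Matrix (Fin m) (Fin m) ℝ), c • (1 : Matrix (Fin n) (Fin n) ℝ))
  | t + 1 =>
      let p := klIter G c β t
      (β • p.1 + (1 - β) • (G * p.2⁻¹ * Gᵀ), β • p.2 + (1 - β) • (Gᵀ * p.1⁻¹ * G))



noncomputable def scalIter (β σ c : ℝ) : ℕ → ℝ
  | 0 => c
  | t + 1 => β * scalIter β σ c t + (1 - β) * σ ^ 2 / scalIter β σ c t

lemma scalIter_pos {β σ c : ℝ} (hβ0 : 0 < β) (hβ1 : β < 1) (hσ : 0 < σ) (hc : 0 < c) :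
    ∀ t, 0 < scalIter β σ c t := by
  intro t
  induction t with
  | zero => exact hc
  | succ t ih =>
      have h1 : 0 < 1 - β := by linarith
      have := ih
      unfold scalIter
      positivity

set_option maxHeartbeats 1000000 in
/-- Pure algebraic contraction step. -/
lemma contraction_key {β q y u φ w : ℝ} (hβ0 : 0 < β) (hβ1 : β < 1)
    (hqβ : β ≤ q) (hqβ' : 1 - β ≤ q) (hq1 : q ≤ 1)
    (hy : 0 < y) (hu : 0 < u) (hyu : y * u = 1)
    (hφ : φ = β * y + (1 - β) * u) (hw : 0 < w) (hφw : φ * w = 1) :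
    max φ w - 1 ≤ q * (max y u - 1) := by
  have hφ0 : 0 < φ := by
    have h1 : 0 < 1 - β := by linarith
    nlinarith [mul_pos hβ0 hy, mul_pos h1 hu]
  rcases le_total 1 y with h1y | h1y
  · have hu1 : u ≤ 1 := by nlinarith [mul_nonneg hu.le (sub_nonneg.2 h1y)]
    have hmax : max y u = y := max_eq_left (by linarith)
    rw [hmax]
    have hb1 : φ ≤ 1 + q * (y - 1) := by
      nlinarith [mul_nonneg (sub_nonneg.2 hqβ) (sub_nonneg.2 h1y)]
    have hyφ : 1 ≤ y * φ := by nlinarith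
    have hwu : w * u ≤ 1 := by
      have he : (y * φ) * (w * u) = (y * u) * (φ * w) := by ring
      rw [hyu, hφw, one_mul] at he
      nlinarith [mul_nonneg hw.le hu.le]
    have h1mφ : 1 - φ ≤ (1 - β) * (y - 1) * u := by nlinarith
    have hb2 : w ≤ 1 + q * (y - 1) := by
      have hw1 : w - 1 = w * (1 - φ) := by nlinarith
      have h2 : w * (1 - φ) ≤ w * ((1 - β) * (y - 1) * u) :=
        mul_le_mul_of_nonneg_left h1mφ hw.le
      have h3 : w * ((1 - β) * (y - 1) * u) ≤ (1 - β) * (y - 1) := by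
        nlinarith [mul_nonneg (mul_nonneg (by linarith : (0:ℝ) ≤ 1 - β)
          (by linarith : (0:ℝ) ≤ y - 1)) (by linarith : (0:ℝ) ≤ 1 - w * u)]
      have h4 : (1 - β) * (y - 1) ≤ q * (y - 1) := by
        nlinarith [mul_nonneg (sub_nonneg.2 hqβ') (sub_nonneg.2 h1y)]
      linarith
    rcases max_cases φ w with ⟨he, _⟩ | ⟨he, _⟩ <;> rw [he] <;> linarith
  · have hu1 : 1 ≤ u := by nlinarith [mul_nonneg hu.le (sub_nonneg.2 h1y)]
    have hmax : max y u = u := max_eq_right (by nlinarith)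
    rw [hmax]
    have hq0 : 0 < q := lt_of_lt_of_le hβ0 hqβ
    have hb1 : φ ≤ 1 + q * (u - 1) := by
      nlinarith [mul_nonneg (sub_nonneg.2 hqβ') (sub_nonneg.2 hu1)]
    have hb2 : w ≤ 1 + q * (u - 1) := by
      have hkey : β * y ≤ q * φ := by
        nlinarith [mul_nonneg (mul_nonneg (by linarith : (0:ℝ) ≤ 1 - q)
            (by linarith : (0:ℝ) ≤ 1 - y)) hβ0.le,
          mul_nonneg (mul_nonneg hq0.le (by linarith : (0:ℝ) ≤ 1 - β))
            (by linarith : (0:ℝ) ≤ u - 1)]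
      have hβw : β * w ≤ q * u := by
        have h := mul_le_mul_of_nonneg_right hkey (mul_pos hw hu).le
        have e1 : β * y * (w * u) = β * w * (y * u) := by ring
        have e2 : q * φ * (w * u) = q * u * (φ * w) := by ring
        rw [e1, hyu, mul_one] at h
        rw [e2, hφw, mul_one] at h
        exact h
      have h1mφ : 1 - φ ≤ β * (1 - y) := by nlinarith
      have hw1 : w - 1 = w * (1 - φ) := by nlinarith
      have hu1' : u - 1 = u * (1 - y) := by nlinarith
      have h2 : w * (1 - φ) ≤ w * (β * (1 - y)) := mul_le_mul_of_nonneg_left h1mφ hw.le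
      have h3 : w * (β * (1 - y)) ≤ q * u * (1 - y) := by
        nlinarith [mul_nonneg (sub_nonneg.2 hβw) (by linarith : (0:ℝ) ≤ 1 - y)]
      rw [hu1']
      nlinarith
    rcases max_cases φ w with ⟨he, _⟩ | ⟨he, _⟩ <;> rw [he] <;> linarith

lemma abs_le_max_sub {y u : ℝ} (hy : 0 < y) (hyu : y * u = 1) :
    |y - 1| ≤ max y u - 1 := by
  have hu : 0 < u := by
    rcases lt_trichotomy u 0 with h | h | h
    · nlinarith
    · rw [h, mul_zero] at hyu; linarith
    · exact h
  rcases le_total 1 y with h | h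
  · rw [abs_of_nonneg (by linarith)]; linarith [le_max_left y u]
  · rw [abs_of_nonpos (by linarith)]
    have h2 : 1 - y ≤ u - 1 := by nlinarith [sq_nonneg (y - 1), mul_pos hy hu]
    linarith [le_max_right y u]

lemma scalIter_tendsto {β σ c : ℝ} (hβ0 : 0 < β) (hβ1 : β < 1) (hσ : 0 < σ) (hc : 0 < c) :
    Tendsto (scalIter β σ c) atTop (nhds σ) := by
  have hq1 : max β (1 - β) < 1 := max_lt hβ1 (by linarith)
  have hq0 : 0 < max β (1 - β) := lt_of_lt_of_le hβ0 (le_max_left _ _)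
  set q := max β (1 - β) with hq
  have hpos := scalIter_pos hβ0 hβ1 hσ hc
  set g : ℕ → ℝ := fun t => max (scalIter β σ c t / σ) (σ / scalIter β σ c t) - 1 with hg
  have hmul : ∀ t, (scalIter β σ c t / σ) * (σ / scalIter β σ c t) = 1 := by
    intro t
    have hx := hpos t
    field_simp
  have hg0 : ∀ t, 0 ≤ g t := by
    intro t
    have hx := hpos t
    have habs := abs_le_max_sub (by positivity : 0 < scalIter β σ c t / σ) (hmul t)
    have := abs_nonneg (scalIter β σ c t / σ - 1)
    simp only [hg]
    linarith
  have hstep : ∀ t, g (t + 1) ≤ q * g t := by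
    intro t
    have hx := hpos t
    have hx' := hpos (t + 1)
    have hφ : scalIter β σ c (t+1) / σ
        = β * (scalIter β σ c t / σ) + (1 - β) * (σ / scalIter β σ c t) := by
      show (β * scalIter β σ c t + (1 - β) * σ ^ 2 / scalIter β σ c t) / σ = _
      field_simp
    have hkey := contraction_key hβ0 hβ1 (le_max_left β (1-β)) (le_max_right β (1-β))
      hq1.le (by positivity : 0 < scalIter β σ c t / σ) (by positivity)
      (hmul t) hφ (by positivity : 0 < σ / scalIter β σ c (t+1)) (hmul (t+1))
    exact hkey
  have hbound : ∀ t, g t ≤ q ^ t * g 0 := by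
    intro t
    induction t with
    | zero => simp
    | succ t ih =>
        calc g (t + 1) ≤ q * g t := hstep t
        _ ≤ q * (q ^ t * g 0) := by nlinarith
        _ = q ^ (t + 1) * g 0 := by ring
  have hgt : Tendsto g atTop (nhds 0) := by
    have hq' : Tendsto (fun t : ℕ => q ^ t * g 0) atTop (nhds 0) := by
      have := tendsto_pow_atTop_nhds_zero_of_lt_one hq0.le hq1
      simpa using this.mul_const (g 0)
    exact squeeze_zero hg0 hbound hq'
  have habs : ∀ t, |scalIter β σ c t - σ| ≤ σ * g t := by
    intro t
    have hx := hpos t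
    have h1 := abs_le_max_sub (by positivity : 0 < scalIter β σ c t / σ) (hmul t)
    have heq : scalIter β σ c t - σ = σ * (scalIter β σ c t / σ - 1) := by
      field_simp
    rw [heq, abs_mul, abs_of_pos hσ]
    have : σ * |scalIter β σ c t / σ - 1| ≤ σ * g t := by
      simp only [hg]
      nlinarith
    exact this
  rw [tendsto_iff_dist_tendsto_zero]
  simp only [Real.dist_eq]
  exact squeeze_zero (fun t => abs_nonneg _) habs (by simpa using hgt.const_mul σ)




section MatrixHelpers

variable {n k : ℕ}

lemma cancelVV {r : ℕ} (V : Matrix (Fin n) (Fin k) ℝ) (hV : Vᵀ * V = 1)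
    (Y : Matrix (Fin k) (Fin r) ℝ) : Vᵀ * (V * Y) = Y := by
  rw [← Matrix.mul_assoc, hV, Matrix.one_mul]

lemma proj_left (V : Matrix (Fin n) (Fin k) ℝ) (hV : Vᵀ * V = 1) :
    Vᵀ * (1 - V * Vᵀ) = 0 := by
  rw [Matrix.mul_sub, Matrix.mul_one, ← Matrix.mul_assoc, hV, Matrix.one_mul, sub_self]

lemma proj_right (V : Matrix (Fin n) (Fin k) ℝ) (hV : Vᵀ * V = 1) :
    (1 - V * Vᵀ) * V = 0 := by
  rw [Matrix.sub_mul, Matrix.one_mul, Matrix.mul_assoc, hV, Matrix.mul_one, sub_self]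

lemma sandwich {p r : ℕ} (V : Matrix (Fin n) (Fin k) ℝ) (hV : Vᵀ * V = 1)
    (X : Matrix (Fin p) (Fin k) ℝ) (Y : Matrix (Fin k) (Fin r) ℝ) :
    (X * Vᵀ) * (V * Y) = X * Y := by
  rw [Matrix.mul_assoc X Vᵀ (V * Y), cancelVV V hV Y]

lemma proj_idem (V : Matrix (Fin n) (Fin k) ℝ) (hV : Vᵀ * V = 1) :
    (1 - V * Vᵀ) * (1 - V * Vᵀ) = 1 - V * Vᵀ := by
  have h : (V * Vᵀ) * (V * Vᵀ) = V * Vᵀ := sandwich V hV V Vᵀ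
  rw [Matrix.mul_sub, Matrix.mul_one, Matrix.sub_mul, Matrix.one_mul, h, sub_self, sub_zero]

lemma diag_sandwich {p r : ℕ} (V : Matrix (Fin n) (Fin k) ℝ) (hV : Vᵀ * V = 1)
    (X : Matrix (Fin p) (Fin k) ℝ) (D : Matrix (Fin k) (Fin k) ℝ)
    (Y : Matrix (Fin k) (Fin r) ℝ) :
    (X * Vᵀ) * (V * D * Y) = X * D * Y := by
  rw [Matrix.mul_assoc V D Y, sandwich V hV X (D * Y), Matrix.mul_assoc]

lemma diag_proj_inv (V : Matrix (Fin n) (Fin k) ℝ) (hV : Vᵀ * V = 1)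
    (w : Fin k → ℝ) (hw : ∀ i, w i ≠ 0) (a : ℝ) (ha : a ≠ 0) :
    (V * diagonal w * Vᵀ + a • (1 - V * Vᵀ))⁻¹
      = V * diagonal (fun i => (w i)⁻¹) * Vᵀ + a⁻¹ • (1 - V * Vᵀ) := by
  apply inv_eq_right_inv
  have h1 : (V * diagonal w * Vᵀ) * (V * diagonal (fun i => (w i)⁻¹) * Vᵀ) = V * Vᵀ := by
    rw [diag_sandwich V hV (V * diagonal w) (diagonal fun i => (w i)⁻¹) Vᵀ,
      Matrix.mul_assoc V (diagonal w) (diagonal fun i => (w i)⁻¹), diagonal_mul_diagonal]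
    have : (fun i => w i * (w i)⁻¹) = fun _ => (1:ℝ) := by
      funext i; exact mul_inv_cancel₀ (hw i)
    rw [this, diagonal_one, Matrix.mul_one]
  have h2 : (V * diagonal w * Vᵀ) * (1 - V * Vᵀ) = 0 := by
    rw [Matrix.mul_assoc, proj_left V hV, Matrix.mul_zero]
  have h3 : (1 - V * Vᵀ) * (V * diagonal (fun i => (w i)⁻¹) * Vᵀ) = 0 := by
    rw [← Matrix.mul_assoc, ← Matrix.mul_assoc, proj_right V hV, Matrix.zero_mul,
      Matrix.zero_mul]
  rw [Matrix.add_mul, Matrix.mul_add, Matrix.mul_add, h1, Matrix.mul_smul, h2, smul_zero,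
    add_zero, Matrix.smul_mul, h3, smul_zero, zero_add, Matrix.smul_mul, Matrix.mul_smul,
    smul_smul, proj_idem V hV, mul_inv_cancel₀ ha, one_smul, add_sub_cancel]

lemma dot_shift {p r : ℕ} (A : Matrix (Fin p) (Fin r) ℝ) (x : Fin p → ℝ) (y : Fin r → ℝ) :
    x ⬝ᵥ (A *ᵥ y) = (Aᵀ *ᵥ x) ⬝ᵥ y := by
  rw [dotProduct_mulVec, ← mulVec_transpose]

lemma posdef_form (V : Matrix (Fin n) (Fin k) ℝ) (hV : Vᵀ * V = 1)
    (w : Fin k → ℝ) (hw : ∀ i, 0 < w i) (a : ℝ) (ha : 0 < a) :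
    (V * diagonal w * Vᵀ + a • (1 - V * Vᵀ)).PosDef := by
  set B : Matrix (Fin n) (Fin n) ℝ := 1 - V * Vᵀ with hB
  have hBsymm : Bᵀ = B := by
    rw [hB, transpose_sub, transpose_one, transpose_mul, transpose_transpose]
  have hBB : B * B = B := proj_idem V hV
  rw [posDef_iff_dotProduct_mulVec]
  constructor
  · show (V * diagonal w * Vᵀ + a • B)ᴴ = _
    rw [conjTranspose_eq_transpose_of_trivial, transpose_add, transpose_smul, hBsymm,
      transpose_mul, transpose_mul, transpose_transpose, diagonal_transpose, Matrix.mul_assoc]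
  · intro x hx
    rw [star_trivial]
    have hsplit : (V * diagonal w * Vᵀ + a • B) *ᵥ x
        = (V * diagonal w * Vᵀ) *ᵥ x + a • (B *ᵥ x) := by
      rw [add_mulVec, smul_mulVec]
    rw [hsplit, dotProduct_add, dotProduct_smul]
    set z : Fin k → ℝ := Vᵀ *ᵥ x with hz
    have hterm1 : x ⬝ᵥ ((V * diagonal w * Vᵀ) *ᵥ x) = z ⬝ᵥ (diagonal w *ᵥ z) := by
      rw [← mulVec_mulVec, ← mulVec_mulVec, dot_shift, ← hz, dot_shift, diagonal_transpose]
    have hterm2 : x ⬝ᵥ (B *ᵥ x) = (B *ᵥ x) ⬝ᵥ (B *ᵥ x) := by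
      conv_lhs => rw [← hBB, ← mulVec_mulVec, dot_shift, hBsymm]
    rw [hterm1, hterm2]
    have h1 : z ⬝ᵥ (diagonal w *ᵥ z) = ∑ i, w i * (z i * z i) := by
      simp only [dotProduct, mulVec_diagonal]
      congr 1; funext i; ring
    have h1nn : 0 ≤ z ⬝ᵥ (diagonal w *ᵥ z) := by
      rw [h1]
      exact Finset.sum_nonneg fun i _ => mul_nonneg (hw i).le (mul_self_nonneg _)
    have h2nn : 0 ≤ (B *ᵥ x) ⬝ᵥ (B *ᵥ x) := by
      exact Finset.sum_nonneg fun i _ => mul_self_nonneg _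
    rcases lt_or_eq_of_le h1nn with h1pos | h1zero
    · have : 0 ≤ a • ((B *ᵥ x) ⬝ᵥ (B *ᵥ x)) := smul_nonneg ha.le h2nn
      have : (0:ℝ) ≤ a * ((B *ᵥ x) ⬝ᵥ (B *ᵥ x)) := this
      simp only [smul_eq_mul]
      linarith
    · have hzzero : z = 0 := by
        rw [h1] at h1zero
        have := (Finset.sum_eq_zero_iff_of_nonneg
          (fun i _ => mul_nonneg (hw i).le (mul_self_nonneg (z i)))).mp h1zero.symm
        funext i
        have hi := this i (Finset.mem_univ i)
        have h0 := mul_self_eq_zero.mp (by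
          rcases mul_eq_zero.mp hi with h | h
          · exact absurd h (ne_of_gt (hw i))
          · exact h)
        simpa using h0
      have hBx : B *ᵥ x ≠ 0 := by
        intro hBx0
        apply hx
        have hxdecomp : x = B *ᵥ x + V *ᵥ z := by
          rw [hz, mulVec_mulVec, hB, sub_mulVec, one_mulVec, sub_add_cancel]
        rw [hxdecomp, hBx0, hzzero, mulVec_zero, add_zero]
      have h2pos : 0 < (B *ᵥ x) ⬝ᵥ (B *ᵥ x) := by
        rcases lt_or_eq_of_le h2nn with h | h
        · exact h
        · exact absurd (dotProduct_self_eq_zero.mp h.symm) hBx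
      have h3 : (0:ℝ) < a * ((B *ᵥ x) ⬝ᵥ (B *ᵥ x)) := mul_pos ha h2pos
      simp only [smul_eq_mul]
      linarith

end MatrixHelpers

section Step

section SqrtHelper

open scoped MatrixOrder

lemma Matrix.PosSemidef.eq_sqrt_of_sq_eq {N : ℕ} {A B : Matrix (Fin N) (Fin N) ℝ}
    (hA : A.PosSemidef) (hB : B.PosSemidef) (h : A ^ 2 = B) : A = hB.sqrt := by
  have hB0 : 0 ≤ B := hB.nonneg
  have hA0 : 0 ≤ A := hA.nonneg
  have h1 : CFC.sqrt B = A := CFC.sqrt_unique (by rw [← h, pow_two])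
  have h2 : CFC.sqrt B = hB.sqrt := by
    rw [CFC.sqrt_eq_real_sqrt B, cfcₙ_eq_cfc, hB.1.cfc_eq]
    rfl
  rw [← h1, h2]

end SqrtHelper

lemma step_formula {m n kk : ℕ} (U : Matrix (Fin m) (Fin kk) ℝ) (V : Matrix (Fin n) (Fin kk) ℝ)
    (hU : Uᵀ * U = 1) (hV : Vᵀ * V = 1) (d w : Fin kk → ℝ) (hw : ∀ i, w i ≠ 0)
    (a β : ℝ) (ha : a ≠ 0) :
    β • (U * diagonal w * Uᵀ + a • (1 - U * Uᵀ)) +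
      (1 - β) • ((U * diagonal d * Vᵀ) *
        (V * diagonal w * Vᵀ + a • (1 - V * Vᵀ))⁻¹ * (V * diagonal d * Uᵀ))
    = U * diagonal (fun i => β * w i + (1 - β) * (d i) ^ 2 / w i) * Uᵀ
        + (β * a) • (1 - U * Uᵀ) := by
  rw [diag_proj_inv V hV w hw a ha]
  have hzero : (U * diagonal d * Vᵀ) * (a⁻¹ • (1 - V * Vᵀ)) = 0 := by
    rw [Matrix.mul_smul, Matrix.mul_assoc, proj_left V hV, Matrix.mul_zero, smul_zero]
  have hA : (U * diagonal d * Vᵀ) * (V * diagonal (fun i => (w i)⁻¹) * Vᵀ)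
      = (U * diagonal d) * diagonal (fun i => (w i)⁻¹) * Vᵀ :=
    diag_sandwich V hV (U * diagonal d) _ Vᵀ
  have hA2 : ((U * diagonal d) * diagonal (fun i => (w i)⁻¹) * Vᵀ) * (V * diagonal d * Uᵀ)
      = ((U * diagonal d) * diagonal (fun i => (w i)⁻¹)) * diagonal d * Uᵀ :=
    diag_sandwich V hV _ _ Uᵀ
  rw [Matrix.mul_add, hzero, add_zero, hA, hA2]
  have hDD : (U * diagonal d) * diagonal (fun i => (w i)⁻¹) * diagonal d
      = U * diagonal (fun i => d i * ((w i)⁻¹ * d i)) := by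
    rw [Matrix.mul_assoc (U * diagonal d), diagonal_mul_diagonal, Matrix.mul_assoc U,
      diagonal_mul_diagonal]
  rw [hDD]
  have hfun : (fun i => β * w i + (1 - β) * (d i * ((w i)⁻¹ * d i)))
      = fun i => β * w i + (1 - β) * (d i) ^ 2 / w i := by
    funext i
    rw [div_eq_mul_inv]
    ring
  have e1 : U * diagonal (fun i => β * w i + (1 - β) * (d i * ((w i)⁻¹ * d i))) * Uᵀ
      = β • (U * diagonal w * Uᵀ)
        + (1 - β) • (U * diagonal (fun i => d i * ((w i)⁻¹ * d i)) * Uᵀ) := by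
    have hd : diagonal (fun i => β * w i + (1 - β) * (d i * ((w i)⁻¹ * d i)))
        = β • diagonal w + (1 - β) • diagonal (fun i => d i * ((w i)⁻¹ * d i)) := by
      rw [← diagonal_smul, ← diagonal_smul, diagonal_add]
      exact congrArg diagonal (funext fun i => by simp)
    rw [hd, Matrix.mul_add, Matrix.add_mul, Matrix.mul_smul, Matrix.smul_mul,
      Matrix.mul_smul, Matrix.smul_mul]
  rw [← hfun, e1, smul_add, smul_smul]
  abel

lemma mp_unique {N : ℕ} {P X Y : Matrix (Fin N) (Fin N) ℝ}
    (hX1 : P * X * P = P) (hX2 : X * P * X = X) (hX3 : (P * X)ᵀ = P * X) (hX4 : (X * P)ᵀ = X * P)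
    (hY1 : P * Y * P = P) (hY2 : Y * P * Y = Y) (hY3 : (P * Y)ᵀ = P * Y) (hY4 : (Y * P)ᵀ = Y * P) :
    X = Y := by
  have hPXY : P * X = P * Y := by
    calc P * X = (P * Y * P) * X := by rw [hY1]
    _ = (P * Y) * (P * X) := by simp only [mul_assoc]
    _ = (P * Y)ᵀ * (P * X)ᵀ := by rw [hY3, hX3]
    _ = ((P * X) * (P * Y))ᵀ := (transpose_mul _ _).symm
    _ = ((P * X * P) * Y)ᵀ := by rw [← mul_assoc]
    _ = (P * Y)ᵀ := by rw [hX1]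
    _ = P * Y := hY3
  have hXPY : X * P = Y * P := by
    calc X * P = X * (P * Y * P) := by rw [hY1]
    _ = (X * P) * (Y * P) := by simp only [mul_assoc]
    _ = (X * P)ᵀ * (Y * P)ᵀ := by rw [hX4, hY4]
    _ = ((Y * P) * (X * P))ᵀ := (transpose_mul _ _).symm
    _ = (Y * (P * X * P))ᵀ := by simp only [mul_assoc]
    _ = (Y * P)ᵀ := by rw [hX1]
    _ = Y * P := hY4
  calc X = X * P * X := hX2.symm
  _ = Y * P * X := by rw [hXPY]
  _ = Y * (P * X) := by rw [mul_assoc]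
  _ = Y * (P * Y) := by rw [hPXY]
  _ = Y * P * Y := by rw [mul_assoc]
  _ = Y := hY2

lemma psd_sandwich {m kk : ℕ} (U : Matrix (Fin m) (Fin kk) ℝ) (w : Fin kk → ℝ)
    (hw : ∀ i, 0 ≤ w i) : (U * diagonal w * Uᵀ).PosSemidef := by
  have h := (posSemidef_diagonal_iff.mpr hw).mul_mul_conjTranspose_same U
  rwa [conjTranspose_eq_transpose_of_trivial] at h

end Step

section MoreHelpers

lemma sandwich_diag_mul {n k p r : ℕ} (V : Matrix (Fin n) (Fin k) ℝ) (hV : Vᵀ * V = 1)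
    (X : Matrix (Fin p) (Fin k) ℝ) (u v : Fin k → ℝ) (Y : Matrix (Fin k) (Fin r) ℝ) :
    (X * diagonal u * Vᵀ) * (V * diagonal v * Y) = X * diagonal (fun i => u i * v i) * Y := by
  rw [diag_sandwich V hV (X * diagonal u) (diagonal v) Y, Matrix.mul_assoc X,
    diagonal_mul_diagonal]

lemma sand_transpose {m k : ℕ} (U : Matrix (Fin m) (Fin k) ℝ) (w : Fin k → ℝ) :
    (U * diagonal w * Uᵀ)ᵀ = U * diagonal w * Uᵀ := by
  rw [transpose_mul, transpose_mul, transpose_transpose, diagonal_transpose,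
    ← Matrix.mul_assoc]

lemma mp_candidate {m k : ℕ} (U : Matrix (Fin m) (Fin k) ℝ) (hU : Uᵀ * U = 1)
    (d : Fin k → ℝ) (hd : ∀ i, d i ≠ 0) :
    (U * diagonal d * Uᵀ) * (U * diagonal (fun i => (d i)⁻¹) * Uᵀ) * (U * diagonal d * Uᵀ)
        = U * diagonal d * Uᵀ ∧
    (U * diagonal (fun i => (d i)⁻¹) * Uᵀ) * (U * diagonal d * Uᵀ)
        * (U * diagonal (fun i => (d i)⁻¹) * Uᵀ) = U * diagonal (fun i => (d i)⁻¹) * Uᵀ ∧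
    ((U * diagonal d * Uᵀ) * (U * diagonal (fun i => (d i)⁻¹) * Uᵀ))ᵀ
        = (U * diagonal d * Uᵀ) * (U * diagonal (fun i => (d i)⁻¹) * Uᵀ) ∧
    ((U * diagonal (fun i => (d i)⁻¹) * Uᵀ) * (U * diagonal d * Uᵀ))ᵀ
        = (U * diagonal (fun i => (d i)⁻¹) * Uᵀ) * (U * diagonal d * Uᵀ) := by
  have hPX : (U * diagonal d * Uᵀ) * (U * diagonal (fun i => (d i)⁻¹) * Uᵀ)
      = U * diagonal (fun i => d i * (d i)⁻¹) * Uᵀ :=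
    sandwich_diag_mul U hU U d _ Uᵀ
  have hXP : (U * diagonal (fun i => (d i)⁻¹) * Uᵀ) * (U * diagonal d * Uᵀ)
      = U * diagonal (fun i => (d i)⁻¹ * d i) * Uᵀ :=
    sandwich_diag_mul U hU U _ d Uᵀ
  refine ⟨?_, ?_, ?_, ?_⟩
  · rw [hPX, sandwich_diag_mul U hU U _ d Uᵀ,
      show (fun i => d i * (d i)⁻¹ * d i) = d from
        funext fun i => by rw [mul_inv_cancel₀ (hd i), one_mul]]
  · rw [hXP, sandwich_diag_mul U hU U _ _ Uᵀ,
      show (fun i => (d i)⁻¹ * d i * (d i)⁻¹) = fun i => (d i)⁻¹ from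
        funext fun i => by rw [inv_mul_cancel₀ (hd i), one_mul]]
  · rw [hPX, sand_transpose]
  · rw [hXP, sand_transpose]

lemma tendsto_closed_form {p k : ℕ} (U : Matrix (Fin p) (Fin k) ℝ) (d : Fin k → ℝ)
    (F : ℕ → Fin k → ℝ) (hFt : ∀ i, Tendsto (fun t => F t i) atTop (nhds (d i)))
    (c β : ℝ) (hβ0 : 0 < β) (hβ1 : β < 1) :
    Tendsto (fun t => U * diagonal (F t) * Uᵀ + (c * β ^ t) • (1 - U * Uᵀ)) atTop
      (nhds (U * diagonal d * Uᵀ)) := by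
  have hdiag : Tendsto (fun t => diagonal (F t)) atTop (nhds (diagonal d)) := by
    exact ((continuous_id.matrix_diagonal).tendsto d).comp (tendsto_pi_nhds.mpr hFt)
  have cont : Continuous (fun A : Matrix (Fin k) (Fin k) ℝ => U * A * Uᵀ) :=
    (continuous_const.matrix_mul continuous_id).matrix_mul continuous_const
  have h1 : Tendsto (fun t => U * diagonal (F t) * Uᵀ) atTop (nhds (U * diagonal d * Uᵀ)) :=
    (cont.tendsto (diagonal d)).comp hdiag
  have h2 : Tendsto (fun t : ℕ => (c * β ^ t) • (1 - U * Uᵀ)) atTop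
      (nhds (0 : Matrix (Fin p) (Fin p) ℝ)) := by
    have hb : Tendsto (fun t : ℕ => c * β ^ t) atTop (nhds 0) := by
      simpa using (tendsto_pow_atTop_nhds_zero_of_lt_one hβ0.le hβ1).const_mul c
    have h := hb.smul_const (1 - U * Uᵀ)
    rwa [zero_smul] at h
  simpa using h1.add h2

end MoreHelpers


/-- **"Instantaneous" KL-Shampoo converges to spectral descent.**
Fix `G ∈ ℝ^{m×n}` with reduced SVD `G = U Σ Vᵀ`, `c > 0` and `β ∈ (0,1)`.  Then all iterates
`L_t`, `R_t` of the coupled KL-Shampoo iteration are symmetric positive definite, the limits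
`L_∞ = (G Gᵀ)^{1/2}` and `R_∞ = (Gᵀ G)^{1/2}` exist, and
`(L_∞)^{†/2} · G · (R_∞)^{†/2} = U Vᵀ`, the polar factor of `G`. -/
theorem statement11 {m n k : ℕ}
    (G : Matrix (Fin m) (Fin n) ℝ)
    (U : Matrix (Fin m) (Fin k) ℝ) (S : Matrix (Fin k) (Fin k) ℝ)
    (V : Matrix (Fin n) (Fin k) ℝ)
    (hU : Uᵀ * U = 1) (hV : Vᵀ * V = 1)
    (hSdiag : ∀ i j, i ≠ j → S i j = 0) (hSpos : ∀ i, 0 < S i i)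
    (hSVD : G = U * S * Vᵀ)
    (c β : ℝ) (hc : 0 < c) (hβ0 : 0 < β) (hβ1 : β < 1)
    (hP : (G * Gᵀ).PosSemidef) (hQ : (Gᵀ * G).PosSemidef)
    -- `Ldag` and `Rdag` are the Moore–Penrose pseudoinverses of
    -- `L_∞ = (G Gᵀ)^{1/2}` and `R_∞ = (Gᵀ G)^{1/2}` respectively.
    (Ldag : Matrix (Fin m) (Fin m) ℝ)
    (hLdag : IsMoorePenrose hP.sqrt Ldag) (hLdagPsd : Ldag.PosSemidef)
    (Rdag : Matrix (Fin n) (Fin n) ℝ)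
    (hRdag : IsMoorePenrose hQ.sqrt Rdag) (hRdagPsd : Rdag.PosSemidef) :
    (∀ t : ℕ, (klIter G c β t).1.PosDef ∧ (klIter G c β t).2.PosDef) ∧
    Tendsto (fun t => (klIter G c β t).1) atTop (nhds hP.sqrt) ∧
    Tendsto (fun t => (klIter G c β t).2) atTop (nhds hQ.sqrt) ∧
    hLdagPsd.sqrt * G * hRdagPsd.sqrt = U * Vᵀ := by
  classical
  set d : Fin k → ℝ := fun i => S i i with hd
  have hdpos : ∀ i, 0 < d i := hSpos
  have hSd : S = diagonal d := by
    ext i j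
    by_cases h : i = j
    · subst h; simp [diagonal_apply_eq, hd]
    · rw [diagonal_apply_ne _ h]; exact hSdiag i j h
  have hG : G = U * diagonal d * Vᵀ := by rw [hSVD, hSd]
  have hGT : Gᵀ = V * diagonal d * Uᵀ := by
    rw [hG, transpose_mul, transpose_mul, transpose_transpose, diagonal_transpose,
      ← Matrix.mul_assoc]
  set F : ℕ → Fin k → ℝ := fun t i => scalIter β (d i) c t with hF
  have hFpos : ∀ t i, 0 < F t i := fun t i => scalIter_pos hβ0 hβ1 (hdpos i) hc t
  -- the closed form of the iteration
  have key : ∀ t, klIter G c β t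
      = (U * diagonal (F t) * Uᵀ + (c * β ^ t) • (1 - U * Uᵀ),
         V * diagonal (F t) * Vᵀ + (c * β ^ t) • (1 - V * Vᵀ)) := by
    intro t
    induction t with
    | zero =>
        have base : ∀ {p : ℕ} (W : Matrix (Fin p) (Fin k) ℝ),
            W * diagonal (F 0) * Wᵀ + (c * β ^ 0) • (1 - W * Wᵀ)
              = c • (1 : Matrix (Fin p) (Fin p) ℝ) := by
          intro p W
          have h1 : diagonal (F 0) = c • (1 : Matrix (Fin k) (Fin k) ℝ) := by
            rw [Matrix.smul_one_eq_diagonal]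
            exact congrArg diagonal (funext fun i => by simp [hF, scalIter])
          rw [h1, pow_zero, mul_one, Matrix.mul_smul, Matrix.mul_one, Matrix.smul_mul,
            ← smul_add, add_sub_cancel]
        show (c • 1, c • 1) = _
        rw [base U, base V]
    | succ t ih =>
        have ha : (c * β ^ t) ≠ 0 := by positivity
        have hwne : ∀ i, F t i ≠ 0 := fun i => (hFpos t i).ne'
        have hFsucc : F (t + 1) = fun i => β * F t i + (1 - β) * (d i) ^ 2 / F t i := by
          funext i
          simp [hF, scalIter]
        have hct : c * β ^ (t + 1) = β * (c * β ^ t) := by ring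
        simp only [klIter, ih]
        refine Prod.ext ?_ ?_
        · show β • (U * diagonal (F t) * Uᵀ + (c * β ^ t) • (1 - U * Uᵀ)) +
            (1 - β) • (G * (V * diagonal (F t) * Vᵀ + (c * β ^ t) • (1 - V * Vᵀ))⁻¹ * Gᵀ) = _
          rw [hGT, hG, step_formula U V hU hV d (F t) hwne _ β ha, hFsucc, hct]
        · show β • (V * diagonal (F t) * Vᵀ + (c * β ^ t) • (1 - V * Vᵀ)) +
            (1 - β) • (Gᵀ * (U * diagonal (F t) * Uᵀ + (c * β ^ t) • (1 - U * Uᵀ))⁻¹ * G) = _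
          rw [hGT, hG, step_formula V U hV hU d (F t) hwne _ β ha, hFsucc, hct]
  -- identification of the square roots
  have hsq1 : (U * diagonal d * Uᵀ) ^ 2 = G * Gᵀ := by
    rw [pow_two, sandwich_diag_mul U hU U d d Uᵀ, hGT, hG,
      sandwich_diag_mul V hV U d d Uᵀ]
  have hsq2 : (V * diagonal d * Vᵀ) ^ 2 = Gᵀ * G := by
    rw [pow_two, sandwich_diag_mul V hV V d d Vᵀ, hGT, hG,
      sandwich_diag_mul U hU V d d Vᵀ]
  have hpsd1 : (U * diagonal d * Uᵀ).PosSemidef := psd_sandwich U d fun i => (hdpos i).le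
  have hpsd2 : (V * diagonal d * Vᵀ).PosSemidef := psd_sandwich V d fun i => (hdpos i).le
  have hsqrtP : U * diagonal d * Uᵀ = hP.sqrt := hpsd1.eq_sqrt_of_sq_eq hP hsq1
  have hsqrtQ : V * diagonal d * Vᵀ = hQ.sqrt := hpsd2.eq_sqrt_of_sq_eq hQ hsq2
  refine ⟨?_, ?_, ?_, ?_⟩
  · -- positive definiteness
    intro t
    rw [key t]
    exact ⟨posdef_form U hU (F t) (hFpos t) _ (by positivity),
      posdef_form V hV (F t) (hFpos t) _ (by positivity)⟩
  · -- convergence of L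
    rw [← hsqrtP]
    have h := tendsto_closed_form U d F
      (fun i => scalIter_tendsto hβ0 hβ1 (hdpos i) hc) c β hβ0 hβ1
    simpa only [key] using h
  · rw [← hsqrtQ]
    have h := tendsto_closed_form V d F
      (fun i => scalIter_tendsto hβ0 hβ1 (hdpos i) hc) c β hβ0 hβ1
    simpa only [key] using h
  · -- the polar factor
    have hLd : Ldag = U * diagonal (fun i => (d i)⁻¹) * Uᵀ := by
      obtain ⟨h1, h2, h3, h4⟩ := hLdag
      rw [← hsqrtP] at h1 h2 h3 h4
      exact mp_unique h1 h2 h3 h4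
        (mp_candidate U hU d (fun i => (hdpos i).ne')).1
        (mp_candidate U hU d (fun i => (hdpos i).ne')).2.1
        (mp_candidate U hU d (fun i => (hdpos i).ne')).2.2.1
        (mp_candidate U hU d (fun i => (hdpos i).ne')).2.2.2
    have hRd : Rdag = V * diagonal (fun i => (d i)⁻¹) * Vᵀ := by
      obtain ⟨h1, h2, h3, h4⟩ := hRdag
      rw [← hsqrtQ] at h1 h2 h3 h4
      exact mp_unique h1 h2 h3 h4
        (mp_candidate V hV d (fun i => (hdpos i).ne')).1
        (mp_candidate V hV d (fun i => (hdpos i).ne')).2.1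
        (mp_candidate V hV d (fun i => (hdpos i).ne')).2.2.1
        (mp_candidate V hV d (fun i => (hdpos i).ne')).2.2.2
    have hsd : ∀ i, Real.sqrt (d i) * Real.sqrt (d i) = d i :=
      fun i => Real.mul_self_sqrt (hdpos i).le
    have hsdne : ∀ i, Real.sqrt (d i) ≠ 0 :=
      fun i => (Real.sqrt_pos.mpr (hdpos i)).ne'
    have hBLpsd : (U * diagonal (fun i => (Real.sqrt (d i))⁻¹) * Uᵀ).PosSemidef :=
      psd_sandwich U _ fun i => by positivity
    have hBRpsd : (V * diagonal (fun i => (Real.sqrt (d i))⁻¹) * Vᵀ).PosSemidef :=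
      psd_sandwich V _ fun i => by positivity
    have hBLsq : (U * diagonal (fun i => (Real.sqrt (d i))⁻¹) * Uᵀ) ^ 2 = Ldag := by
      rw [pow_two, sandwich_diag_mul U hU U _ _ Uᵀ, hLd,
        show (fun i => (Real.sqrt (d i))⁻¹ * (Real.sqrt (d i))⁻¹) = fun i => (d i)⁻¹ from
          funext fun i => by rw [← mul_inv, hsd i]]
    have hBRsq : (V * diagonal (fun i => (Real.sqrt (d i))⁻¹) * Vᵀ) ^ 2 = Rdag := by
      rw [pow_two, sandwich_diag_mul V hV V _ _ Vᵀ, hRd,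
        show (fun i => (Real.sqrt (d i))⁻¹ * (Real.sqrt (d i))⁻¹) = fun i => (d i)⁻¹ from
          funext fun i => by rw [← mul_inv, hsd i]]
    have hBL : U * diagonal (fun i => (Real.sqrt (d i))⁻¹) * Uᵀ = hLdagPsd.sqrt :=
      hBLpsd.eq_sqrt_of_sq_eq hLdagPsd hBLsq
    have hBR : V * diagonal (fun i => (Real.sqrt (d i))⁻¹) * Vᵀ = hRdagPsd.sqrt :=
      hBRpsd.eq_sqrt_of_sq_eq hRdagPsd hBRsq
    rw [← hBL, ← hBR, hG, sandwich_diag_mul U hU U _ d Vᵀ,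
      sandwich_diag_mul V hV U _ _ Vᵀ]
    have hone : (fun i => (Real.sqrt (d i))⁻¹ * d i * (Real.sqrt (d i))⁻¹) =
        fun _ => (1 : ℝ) := by
      funext i
      rw [mul_comm ((Real.sqrt (d i))⁻¹) (d i), mul_assoc, ← mul_inv, hsd i,
        mul_inv_cancel₀ (hdpos i).ne']
    rw [hone, diagonal_one, Matrix.mul_one]
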